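/- arXiv:2603.01435 — 3 statements merged into one kernel-verified Lean document; each statement's English description precedes it below -/
import Mathlib

section
/- Local quadratic expansion of Kullback–Leibler divergence: let p = (p_i) and q = (q_i) be probability distributions on [n] with q_min := min_i q_i > 0 and max_i |p_i - q_i| ≤ q_min/2. Then |D(p‖q) - (1/2) Σ_i (p_i - q_i)²/q_i| ≤ 5 q_min^{-2} Σ_i |p_i - q_i|³, where D(p‖q) = Σ_i p_i log(p_i/q_i). -/
/-!
Write `p i = q i (1 + x i)` with `|x i| ≤ 1/2`. Then
`p i log (p i / q i) = q i φ(x i)` with `φ x = (1 + x) log (1 + x)`, and the second-order Taylor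
expansion `φ x = x + x²/2 + O(|x|³)` gives each summand up to an
error `(7/2) |p i - q i|³ / q i²`. The linear terms `∑ (p i - q i)` cancel because `p` and `q` have the same total mass.
-/

open Finset Real

lemma abs_one_add_mul_log_one_add_sub_le {x : ℝ} (hx : |x| ≤ 1 / 2) :
    |(1 + x) * log (1 + x) - x - x ^ 2 / 2| ≤ 7 / 2 * |x| ^ 3 := by
  have hlog : |log (1 + x) - x + x ^ 2 / 2| ≤ 2 * |x| ^ 3 := by
    calc |log (1 + x) - x + x ^ 2 / 2|
        = |∑ i ∈ range 2, (-x) ^ (i + 1) / (i + 1) + log (1 - -x)| := by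
          simp only [sum_range_succ, sum_range_zero, sub_neg_eq_add]; congr 1; push_cast; ring
      _ ≤ |-x| ^ (2 + 1) / (1 - |-x|) :=
          abs_log_sub_add_sum_range_le (by rw [abs_neg]; linarith) 2
      _ = |x| ^ 3 / (1 - |x|) := by rw [abs_neg]
      _ ≤ |x| ^ 3 / (1 / 2) := by gcongr; linarith
      _ = 2 * |x| ^ 3 := by ring
  have h1x : |1 + x| ≤ 3 / 2 := by
    rw [abs_le] at hx ⊢; constructor <;> linarith
  -- `(1 + x)(x - x²/2) = x + x²/2 - x³/2`, so only the cubic term survives besides `log`'s remainder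
  calc |(1 + x) * log (1 + x) - x - x ^ 2 / 2|
      = |(1 + x) * (log (1 + x) - x + x ^ 2 / 2) - x ^ 3 / 2| := by ring_nf
    _ ≤ |1 + x| * |log (1 + x) - x + x ^ 2 / 2| + |x| ^ 3 / 2 := by
        refine (abs_sub _ _).trans_eq ?_
        rw [abs_mul, abs_div, abs_pow, abs_two]
    _ ≤ 3 / 2 * (2 * |x| ^ 3) + |x| ^ 3 / 2 := by gcongr
    _ = 7 / 2 * |x| ^ 3 := by ring

lemma abs_mul_log_div_sub_le {p q : ℝ} (hq : 0 < q) (hpq : |p - q| ≤ q / 2) :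
    |p * log (p / q) - (p - q) - (p - q) ^ 2 / (2 * q)| ≤ 7 / 2 * |p - q| ^ 3 / q ^ 2 := by
  set x := (p - q) / q with hx_def
  have hx : |x| ≤ 1 / 2 := by
    rw [abs_div, abs_of_pos hq, div_le_iff₀ hq]; linarith
  have hpx : p = q * (1 + x) := by rw [hx_def]; field_simp; ring
  have hpqx : p - q = q * x := by rw [hpx]; ring
  calc |p * log (p / q) - (p - q) - (p - q) ^ 2 / (2 * q)|
      = |q * ((1 + x) * log (1 + x) - x - x ^ 2 / 2)| := by
        rw [hpqx, hpx, mul_div_cancel_left₀ _ hq.ne']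
        congr 1; field_simp
    _ = q * |(1 + x) * log (1 + x) - x - x ^ 2 / 2| := by rw [abs_mul, abs_of_pos hq]
    _ ≤ q * (7 / 2 * |x| ^ 3) := by gcongr; exact abs_one_add_mul_log_one_add_sub_le hx
    _ = 7 / 2 * |p - q| ^ 3 / q ^ 2 := by
        rw [hpqx, abs_mul, abs_of_pos hq]; field_simp

lemma sum_mul_log_div_sub_half_sum_sq_div {ι : Type*} (s : Finset ι) {p q : ι → ℝ}
    (hpq : ∑ i ∈ s, p i = ∑ i ∈ s, q i) :
    ∑ i ∈ s, p i * log (p i / q i) - 1 / 2 * ∑ i ∈ s, (p i - q i) ^ 2 / q i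
      = ∑ i ∈ s, (p i * log (p i / q i) - (p i - q i) - (p i - q i) ^ 2 / (2 * q i)) := by
  have hlin : ∑ i ∈ s, (p i - q i) = 0 := by rw [sum_sub_distrib, hpq, sub_self]
  rw [sum_sub_distrib, sum_sub_distrib, hlin, mul_sum, sub_zero]
  congr 1
  exact sum_congr rfl fun i _ => by rw [div_mul_eq_div_div]; ring

lemma abs_sum_mul_log_div_sub_half_sum_sq_div_le {ι : Type*} (s : Finset ι) {p q : ι → ℝ}
    {m : ℝ} (hm : 0 < m) (hq : ∀ i ∈ s, m ≤ q i) (hpq : ∀ i ∈ s, |p i - q i| ≤ m / 2)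
    (hsum : ∑ i ∈ s, p i = ∑ i ∈ s, q i) :
    |∑ i ∈ s, p i * log (p i / q i) - 1 / 2 * ∑ i ∈ s, (p i - q i) ^ 2 / q i|
      ≤ 7 / 2 * (m ^ 2)⁻¹ * ∑ i ∈ s, |p i - q i| ^ 3 := by
  rw [sum_mul_log_div_sub_half_sum_sq_div s hsum, mul_sum]
  refine (abs_sum_le_sum_abs _ _).trans (sum_le_sum fun i hi => ?_)
  have hqi := hm.trans_le (hq i hi)
  calc _ ≤ 7 / 2 * |p i - q i| ^ 3 / q i ^ 2 :=
        abs_mul_log_div_sub_le hqi ((hpq i hi).trans (by linarith [hq i hi]))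
    _ ≤ 7 / 2 * |p i - q i| ^ 3 / m ^ 2 := by gcongr; exact hq i hi
    _ = 7 / 2 * (m ^ 2)⁻¹ * |p i - q i| ^ 3 := by ring

theorem stmt_6_general (n : ℕ) (p q : Fin (n + 1) → ℝ)
    (hp1 : ∑ i, p i = 1)
    (hq1 : ∑ i, q i = 1)
    (qmin : ℝ) (hqmin : qmin = Finset.univ.inf' Finset.univ_nonempty q)
    (hpos : 0 < qmin)
    (hclose : ∀ i, |p i - q i| ≤ qmin / 2) :
    |(∑ i, p i * Real.log (p i / q i)) - (1 / 2) * ∑ i, (p i - q i) ^ 2 / q i|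
      ≤ 5 * (qmin ^ 2)⁻¹ * ∑ i, |p i - q i| ^ 3 := by
  have hqi : ∀ i ∈ univ, qmin ≤ q i := fun i hi => hqmin ▸ inf'_le q hi
  refine (abs_sum_mul_log_div_sub_half_sum_sq_div_le univ hpos hqi (fun i _ => hclose i)
    (hp1.trans hq1.symm)).trans ?_
  gcongr
  norm_num

/-- Local quadratic expansion of the Kullback–Leibler divergence. -/
theorem stmt_6 (n : ℕ) (p q : Fin (n + 1) → ℝ)
    (hp0 : ∀ i, 0 ≤ p i) (hp1 : ∑ i, p i = 1)
    (hq0 : ∀ i, 0 ≤ q i) (hq1 : ∑ i, q i = 1)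
    (qmin : ℝ) (hqmin : qmin = Finset.univ.inf' Finset.univ_nonempty q)
    (hpos : 0 < qmin)
    (hclose : ∀ i, |p i - q i| ≤ qmin / 2) :
    |(∑ i, p i * Real.log (p i / q i)) - (1 / 2) * ∑ i, (p i - q i) ^ 2 / q i|
      ≤ 5 * (qmin ^ 2)⁻¹ * ∑ i, |p i - q i| ^ 3 :=
  stmt_6_general n p q hp1 hq1 qmin hqmin hpos hclose
end

section
/- Counting sequences with all-even multiplicities: the number of sequences (i_1, …, i_m) ∈ [N]^m (m even) such that each value of [N] appears an even number of times is at most (m! / (m/2)!) · N^{m/2}. -/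
/-!
In a sequence of length `m + 2` whose values all have even multiplicity, the first value recurs
at some later position `p`. Deleting both positions leaves a sequence of length `m` with the same
property, and the original sequence is recovered from `p`, the deleted value and the shorter
sequence. Writing `E(m)` for the number of such sequences in `[N]^m`, this gives
`E(m + 2) ≤ (m + 1) · N · E(m)`, so `E(2k) ≤ (2k - 1)‼ · N^k`, and
`(2k - 1)‼ · k! ≤ (2k)!` because `(2k)! = 2^k · k! · (2k - 1)‼`.
-/

open Finset Nat

def evenFiberSeqs (m : ℕ) (β : Type*) [Fintype β] [DecidableEq β] : Finset (Fin m → β) :=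
  {f | ∀ b, Even #{l | f l = b}}

def insertPair {β : Type*} {m : ℕ} (b : β) (p : Fin (m + 1)) (r : Fin m → β) :
    Fin (m + 2) → β :=
  Fin.cons b (p.insertNth b r)

section

variable {β : Type*} {m : ℕ}

lemma card_fiber_insertPair [DecidableEq β] (b : β) (p : Fin (m + 1)) (r : Fin m → β) (c : β) :
    #{x | insertPair b p r x = c} = #{i | r i = c} + 2 * if b = c then 1 else 0 := by
  rw [card_filter, card_filter, Fin.sum_univ_succ, Fin.sum_univ_succAbove _ p]
  simp only [insertPair, Fin.cons_zero, Fin.cons_succ, Fin.insertNth_apply_same,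
    Fin.insertNth_apply_succAbove]
  ring

lemma insertPair_mem_evenFiberSeqs_iff [Fintype β] [DecidableEq β] (b : β) (p : Fin (m + 1))
    (r : Fin m → β) : insertPair b p r ∈ evenFiberSeqs (m + 2) β ↔ r ∈ evenFiberSeqs m β := by
  simp only [evenFiberSeqs, mem_filter, mem_univ, true_and, card_fiber_insertPair,
    Nat.even_add, even_two_mul, iff_true]

lemma insertPair_removeNth_tail (f : Fin (m + 2) → β) (p : Fin (m + 1)) (hp : f p.succ = f 0) :
    insertPair (f 0) p (p.removeNth (Fin.tail f)) = f := by
  rw [insertPair]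
  nth_rw 2 [← hp]
  rw [show f p.succ = Fin.tail f p from rfl, Fin.insertNth_self_removeNth, Fin.cons_self_tail]

lemma exists_succ_apply_eq_apply_zero [Fintype β] [DecidableEq β] {f : Fin (m + 2) → β}
    (hf : f ∈ evenFiberSeqs (m + 2) β) : ∃ p : Fin (m + 1), f p.succ = f 0 := by
  have hfiber : 1 < #{x | f x = f 0} := by
    obtain ⟨c, hc⟩ := (mem_filter.1 hf).2 (f 0)
    have : 0 < #{x | f x = f 0} := card_pos.2 ⟨0, by simp⟩
    omega
  obtain ⟨x, hx, hx0⟩ := exists_mem_ne hfiber 0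
  obtain ⟨p, rfl⟩ := Fin.exists_succ_eq.2 hx0
  exact ⟨p, (mem_filter.1 hx).2⟩

variable [Fintype β] [DecidableEq β]

lemma card_evenFiberSeqs_add_two_le :
    #(evenFiberSeqs (m + 2) β) ≤ (m + 1) * (Fintype.card β * #(evenFiberSeqs m β)) := by
  have hsurj : Set.SurjOn (fun q : Fin (m + 1) × β × (Fin m → β) => insertPair q.2.1 q.1 q.2.2)
      ↑(univ ×ˢ univ ×ˢ evenFiberSeqs m β : Finset (Fin (m + 1) × β × (Fin m → β)))
      ↑(evenFiberSeqs (m + 2) β) := by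
    intro f hf
    obtain ⟨p, hp⟩ := exists_succ_apply_eq_apply_zero hf
    have hdecode := insertPair_removeNth_tail f p hp
    refine ⟨(p, f 0, p.removeNth (Fin.tail f)), ?_, hdecode⟩
    simp only [coe_product, coe_univ, Set.mem_prod, Set.mem_univ, true_and, mem_coe]
    rw [← insertPair_mem_evenFiberSeqs_iff (f 0) p, hdecode]
    exact hf
  simpa using card_le_card_of_surjOn _ hsurj

lemma card_evenFiberSeqs_two_mul_le (k : ℕ) :
    #(evenFiberSeqs (2 * k) β) ≤ (2 * k - 1)‼ * Fintype.card β ^ k := by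
  induction k with
  | zero => exact (card_le_univ _).trans (by simp)
  | succ k ih =>
    rw [show 2 * (k + 1) = 2 * k + 2 by ring, show 2 * k + 2 - 1 = 2 * k + 1 by omega,
      doubleFactorial_add_one]
    calc #(evenFiberSeqs (2 * k + 2) β)
        ≤ (2 * k + 1) * (Fintype.card β * #(evenFiberSeqs (2 * k) β)) :=
          card_evenFiberSeqs_add_two_le
      _ ≤ (2 * k + 1) * (Fintype.card β * ((2 * k - 1)‼ * Fintype.card β ^ k)) := by gcongr
      _ = (2 * k + 1) * (2 * k - 1)‼ * Fintype.card β ^ (k + 1) := by ring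

end

lemma doubleFactorial_two_mul_sub_one_mul_factorial_le (k : ℕ) :
    (2 * k - 1)‼ * k ! ≤ (2 * k)! := by
  cases k with
  | zero => rfl
  | succ j =>
    have h := factorial_eq_mul_doubleFactorial (2 * j + 1)
    rw [show 2 * j + 1 + 1 = 2 * (j + 1) by ring, doubleFactorial_two_mul] at h
    rw [show 2 * (j + 1) - 1 = 2 * j + 1 by omega, h, mul_comm]
    gcongr
    exact Nat.le_mul_of_pos_left _ (Nat.two_pow_pos _)

theorem stmt_10_general (N m : ℕ) (hm : Even m) :
    ((Finset.univ.filter (fun f : Fin m → Fin N =>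
        ∀ j : Fin N, Even ((Finset.univ.filter (fun l : Fin m => f l = j)).card))).card : ℝ)
      ≤ (Nat.factorial m : ℝ) / (Nat.factorial (m / 2)) * (N : ℝ) ^ (m / 2) := by
  obtain ⟨k, rfl⟩ := hm
  rw [← two_mul, Nat.mul_div_cancel_left k two_pos]
  have hcount : (#(evenFiberSeqs (2 * k) (Fin N)) : ℝ) ≤ (2 * k - 1)‼ * (N : ℝ) ^ k := by
    exact_mod_cast (card_evenFiberSeqs_two_mul_le k).trans_eq (by rw [Fintype.card_fin])
  have hfactorial : ((2 * k - 1)‼ : ℝ) ≤ (2 * k)! / k ! := by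
    rw [le_div_iff₀ (by positivity)]
    exact_mod_cast doubleFactorial_two_mul_sub_one_mul_factorial_le k
  calc _ = (#(evenFiberSeqs (2 * k) (Fin N)) : ℝ) := by
        -- not `rfl`: the two filters use different `Decidable` instances for `∀ j : Fin N, _`
        unfold evenFiberSeqs; congr
    _ ≤ (2 * k - 1)‼ * (N : ℝ) ^ k := hcount
    _ ≤ (2 * k)! / k ! * (N : ℝ) ^ k := by gcongr

/-- Counting sequences with all-even multiplicities: the number of sequences in
`[N]^m` (m even) in which every value appears an even number of times is at most
`(m!/(m/2)!) · N^(m/2)`. -/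
theorem stmt_10 (N m : ℕ) (hN : 1 ≤ N) (hm : Even m) :
    ((Finset.univ.filter (fun f : Fin m → Fin N =>
        ∀ j : Fin N, Even ((Finset.univ.filter (fun l : Fin m => f l = j)).card))).card : ℝ)
      ≤ (Nat.factorial m : ℝ) / (Nat.factorial (m / 2)) * (N : ℝ) ^ (m / 2) :=
  stmt_10_general N m hm
end

section
/- Admissible matrix count: the number of matrices (r_{ab}) ∈ (N^{-1}ℤ_{≥0})^{κ×κ} with all row and column sums equal to 1/κ and satisfying (l-1)/N ≤ ‖r - κ^{-2}𝟙𝟙^T‖_F² < l/N is at most C (lN)^{(κ-1)²/2} for a constant C depending only on κ; in particular, such a matrix is uniquely determined by its leading principal (κ-1)×(κ-1) submatrix. -/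
/-!
An admissible matrix is pinned down by its leading `(κ-1) × (κ-1)` block: each of the first
`κ - 1` rows loses only its last entry, which its row sum recovers, and then the last row is
recovered from the column sums. This gives the uniqueness claim and reduces the count to one
over blocks. Each entry `z / N` of an admissible matrix lies within `√(l / N)` of `κ⁻²`, since
its squared deviation is one term of the Frobenius sum; so the integer `z` ranges over an
interval of length `2 √(l N)`, which holds at most `2 √(l N) + 1 ≤ 3 √(l N)` integers. Hence
there are at most `(3 √(l N)) ^ (κ-1)²` blocks.
-/

open Finset

theorem Fintype.eq_of_sum_eq_of_eq_off {ι α : Type*} [Fintype ι] [AddCancelCommMonoid α]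
    {f g : ι → α} (i₀ : ι) (hsum : ∑ i, f i = ∑ i, g i) (hoff : ∀ i ≠ i₀, f i = g i) :
    f = g := by
  classical
  have hrest : ∑ i ∈ univ.erase i₀, f i = ∑ i ∈ univ.erase i₀, g i :=
    Finset.sum_congr rfl fun i hi => hoff i (ne_of_mem_erase hi)
  funext i
  by_cases hi : i = i₀
  · subst hi
    rw [← add_sum_erase _ _ (mem_univ i), ← add_sum_erase _ _ (mem_univ i), hrest] at hsum
    exact add_right_cancel hsum
  · exact hoff i hi

theorem Matrix.eq_of_sums_eq_of_eq_off {m n α : Type*} [Fintype m] [Fintype n]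
    [AddCancelCommMonoid α] {r r' : Matrix m n α} (i₀ : m) (j₀ : n)
    (hrow : ∀ i, ∑ j, r i j = ∑ j, r' i j) (hcol : ∀ j, ∑ i, r i j = ∑ i, r' i j)
    (hoff : ∀ i ≠ i₀, ∀ j ≠ j₀, r i j = r' i j) : r = r' := by
  have hrows : ∀ i ≠ i₀, r i = r' i := fun i hi =>
    Fintype.eq_of_sum_eq_of_eq_off j₀ (hrow i) (hoff i hi)
  ext i j
  exact congrFun (Fintype.eq_of_sum_eq_of_eq_off (f := fun i => r i j) (g := fun i => r' i j)
    i₀ (hcol j) fun i hi => congrFun (hrows i hi) j) i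

theorem Matrix.eq_of_sums_eq_of_castLE_eq {α : Type*} [AddCancelCommMonoid α] {κ : ℕ}
    (hκ : 0 < κ) {r r' : Matrix (Fin κ) (Fin κ) α}
    (hrow : ∀ i, ∑ j, r i j = ∑ j, r' i j) (hcol : ∀ j, ∑ i, r i j = ∑ i, r' i j)
    (hblock : ∀ a b : Fin (κ - 1),
      r (Fin.castLE (Nat.sub_le κ 1) a) (Fin.castLE (Nat.sub_le κ 1) b) =
        r' (Fin.castLE (Nat.sub_le κ 1) a) (Fin.castLE (Nat.sub_le κ 1) b)) :
    r = r' := by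
  refine eq_of_sums_eq_of_eq_off ⟨κ - 1, by omega⟩ ⟨κ - 1, by omega⟩ hrow hcol
    fun i hi j hj => ?_
  simp only [Ne, Fin.ext_iff] at hi hj
  exact hblock ⟨i, by omega⟩ ⟨j, by omega⟩

theorem Set.ncard_le_card_pow_of_injOn {α β m n : Type*} [Fintype m] [Fintype n]
    {S : Set α} {f : α → m → n → β} (A : Finset β) (hA : ∀ x ∈ S, ∀ i j, f x i j ∈ A)
    (hf : S.InjOn f) : S.ncard ≤ #A ^ (Fintype.card m * Fintype.card n) := by
  classical
  calc S.ncard ≤ (Fintype.piFinset fun _ : m => Fintype.piFinset fun _ : n => A : Set _).ncard :=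
        Set.ncard_le_ncard_of_injOn f (fun x hx => by simpa using hA x hx) hf
    _ = _ := by
      rw [Set.ncard_coe_finset]
      simp [pow_mul']

theorem Int.card_Icc_ceil_sub_floor_add_le {t s : ℝ} (hs : 0 ≤ s) :
    (#(Icc ⌈t - s⌉ ⌊t + s⌋) : ℝ) ≤ 2 * s + 1 := by
  rw [Int.card_Icc, ← Int.cast_natCast, Int.toNat_eq_max]
  push_cast
  refine max_le ?_ (by linarith)
  linarith [Int.floor_le (t + s), Int.le_ceil (t - s)]

theorem Int.mem_Icc_ceil_sub_floor_add {z : ℤ} {t s : ℝ} (h : |(z : ℝ) - t| ≤ s) :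
    z ∈ Icc ⌈t - s⌉ ⌊t + s⌋ := by
  rw [abs_le] at h
  rw [mem_Icc, Int.ceil_le, Int.le_floor]
  constructor <;> linarith

theorem Matrix.sq_le_sum_sum_sq {m n R : Type*} [Fintype m] [Fintype n] [CommRing R]
    [LinearOrder R] [IsStrictOrderedRing R] (M : Matrix m n R) (a : m) (b : n) :
    M a b ^ 2 ≤ ∑ i, ∑ j, M i j ^ 2 :=
  (single_le_sum (f := fun j => M a j ^ 2) (fun _ _ => sq_nonneg _) (mem_univ b)).trans
    (single_le_sum (f := fun i => ∑ j, M i j ^ 2) (fun _ _ => sum_nonneg fun _ _ => sq_nonneg _)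
      (mem_univ a))

theorem abs_mul_sub_mul_lt_sqrt {N x c δ : ℝ} (hN : 0 < N) (h : (x - c) ^ 2 < δ / N) :
    |N * x - N * c| < √(δ * N) := by
  rw [Real.lt_sqrt (abs_nonneg _), sq_abs, ← mul_sub, mul_pow]
  rw [lt_div_iff₀ hN] at h
  nlinarith

theorem Matrix.ncard_le_of_sum_sq_sub_lt {κ N : ℕ} (hκ : 0 < κ) (hN : 0 < N) {s c δ : ℝ}
    (S : Set (Matrix (Fin κ) (Fin κ) ℝ))
    (hS : ∀ r ∈ S, (∀ a b, ∃ z : ℕ, r a b = (z : ℝ) / N) ∧ (∀ a, ∑ b, r a b = s) ∧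
      (∀ b, ∑ a, r a b = s) ∧ ∑ a, ∑ b, (r a b - c) ^ 2 < δ / N) :
    (S.ncard : ℝ) ≤ (2 * √(δ * N) + 1) ^ ((κ - 1) ^ 2) := by
  set e := Fin.castLE (Nat.sub_le κ 1)
  set A := (Icc ⌈N * c - √(δ * N)⌉ ⌊N * c + √(δ * N)⌋).image (Int.cast : ℤ → ℝ)
  have hinj : S.InjOn fun r a b => (N : ℝ) * r (e a) (e b) := by
    intro r hr r' hr' h
    obtain ⟨-, hrow, hcol, -⟩ := hS r hr
    obtain ⟨-, hrow', hcol', -⟩ := hS r' hr'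
    refine eq_of_sums_eq_of_castLE_eq hκ (fun i => (hrow i).trans (hrow' i).symm)
      (fun j => (hcol j).trans (hcol' j).symm) fun a b => ?_
    exact mul_left_cancel₀ (by positivity) (congrFun (congrFun h a) b)
  have hmem : ∀ r ∈ S, ∀ a b, (N : ℝ) * r (e a) (e b) ∈ A := by
    intro r hr a b
    obtain ⟨hgrid, -, -, hdev⟩ := hS r hr
    obtain ⟨z, hz⟩ := hgrid (e a) (e b)
    have hNz : (N : ℝ) * r (e a) (e b) = ((z : ℤ) : ℝ) := by
      rw [hz]; push_cast; field_simp
    have hentry : (r (e a) (e b) - c) ^ 2 < δ / N :=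
      ((of fun i j => r i j - c).sq_le_sum_sum_sq (e a) (e b)).trans_lt hdev
    have hclose := abs_mul_sub_mul_lt_sqrt (Nat.cast_pos.2 hN) hentry
    rw [hNz] at hclose ⊢
    exact mem_image_of_mem _ (Int.mem_Icc_ceil_sub_floor_add hclose.le)
  calc (S.ncard : ℝ) ≤ (#A ^ ((κ - 1) ^ 2) : ℕ) := by
        exact_mod_cast (Set.ncard_le_card_pow_of_injOn A hmem hinj).trans_eq (by simp [sq])
    _ ≤ (2 * √(δ * N) + 1) ^ ((κ - 1) ^ 2) := by
        push_cast
        gcongr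
        exact (Nat.cast_le.2 card_image_le).trans
          (Int.card_Icc_ceil_sub_floor_add_le (Real.sqrt_nonneg _))

/-- Admissible matrix count: matrices with entries in `N⁻¹ℤ_{≥0}`, all row and
column sums `1/κ`, and `(l-1)/N ≤ ‖r - κ⁻²𝟙𝟙ᵀ‖_F² < l/N` number at most
`C (lN)^{(κ-1)²/2}` with `C` depending only on `κ`; moreover any admissible
matrix is uniquely determined by its leading principal `(κ-1)×(κ-1)` submatrix. -/
theorem stmt_19 (κ : ℕ) (hκ : 2 ≤ κ) :
    ∃ C : ℝ, 0 < C ∧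
      ∀ N l : ℕ, κ ∣ N → 1 ≤ l → l ≤ N →
        (((Set.ncard {r : Matrix (Fin κ) (Fin κ) ℝ |
            (∀ a b, ∃ z : ℕ, r a b = (z : ℝ) / N) ∧
            (∀ a, ∑ b, r a b = 1 / κ) ∧
            (∀ b, ∑ a, r a b = 1 / κ) ∧
            ((l : ℝ) - 1) / N ≤ ∑ a, ∑ b, (r a b - ((κ : ℝ) ^ 2)⁻¹) ^ 2 ∧
            (∑ a, ∑ b, (r a b - ((κ : ℝ) ^ 2)⁻¹) ^ 2) < (l : ℝ) / N} : ℕ) : ℝ)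
          ≤ C * ((l * N : ℕ) : ℝ) ^ ((((κ - 1 : ℕ) ^ 2 : ℕ) : ℝ) / 2)) ∧
        ∀ r r' : Matrix (Fin κ) (Fin κ) ℝ,
          ((∀ a b, ∃ z : ℕ, r a b = (z : ℝ) / N) ∧
            (∀ a, ∑ b, r a b = 1 / κ) ∧ (∀ b, ∑ a, r a b = 1 / κ)) →
          ((∀ a b, ∃ z : ℕ, r' a b = (z : ℝ) / N) ∧
            (∀ a, ∑ b, r' a b = 1 / κ) ∧ (∀ b, ∑ a, r' a b = 1 / κ)) →
          (∀ a b : Fin (κ - 1),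
            r (Fin.castLE (by omega) a) (Fin.castLE (by omega) b)
              = r' (Fin.castLE (by omega) a) (Fin.castLE (by omega) b)) →
          r = r' := by
  refine ⟨3 ^ ((κ - 1) ^ 2), by positivity, fun N l _ hl hlN => ⟨?_, ?_⟩⟩
  · have hsqrt : 1 ≤ √((l * N : ℕ) : ℝ) :=
      Real.one_le_sqrt.2 (Nat.one_le_cast.2 (Nat.mul_pos hl (by omega)))
    calc _ ≤ (2 * √((l : ℝ) * N) + 1) ^ ((κ - 1) ^ 2) :=
          Matrix.ncard_le_of_sum_sq_sub_lt (by omega) (by omega) _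
            fun r hr => ⟨hr.1, hr.2.1, hr.2.2.1, hr.2.2.2.2⟩
      _ ≤ (3 * √((l * N : ℕ) : ℝ)) ^ ((κ - 1) ^ 2) := by
          push_cast at hsqrt ⊢
          gcongr
          linarith
      _ = _ := by
          rw [Real.rpow_div_two_eq_sqrt _ (Nat.cast_nonneg _), Real.rpow_natCast, mul_pow]
  · rintro r r' ⟨-, hrow, hcol⟩ ⟨-, hrow', hcol'⟩ hblock
    exact Matrix.eq_of_sums_eq_of_castLE_eq (by omega) (fun i => (hrow i).trans (hrow' i).symm)
      (fun j => (hcol j).trans (hcol' j).symm) hblock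
end
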